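/- arXiv:0708.3533 — 4 statements merged into one kernel-verified Lean document; each statement's English description precedes it below -/
import Mathlib

section
/- Let N ≥ 2 be an even integer, R > 1 a real number, and C_s > 0 a constant. Let ŝ : ℤ → ℂ satisfy |ŝ(m)| ≤ C_s·R^{−|m|} for all m ∈ ℤ. Then for every coefficient vector α̂ = (α̂_k)_{−N/2<k≤N/2} ∈ ℂ^N, the ℓ²-norm of the sequence (m ↦ (N/(2π))·ŝ(m)·α̂_{⟨m⟩_N}) over m ∈ ℤ is at most (C_s·N/(2π))·√((R²+1)/(R²−1))·|α̂|, where |α̂| := (∑_{−N/2<k≤N/2} |α̂_k|²)^{1/2}. (This is the bound ‖Q‖ ≤ (C_s N/(2π))·√((R²+1)/(R²−1)) on the operator Q mapping discrete MFS Fourier coefficients to boundary Fourier coefficients.) -/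
open scoped BigOperators

noncomputable section

/-- The unique representative of `m` modulo `N` lying in the window `(-N/2, N/2]`. -/
def winRep (N : ℕ) (m : ℤ) : ℤ := (m + (N : ℤ) / 2 - 1) % (N : ℤ) - ((N : ℤ) / 2 - 1)

/-- The index window `(-N/2, N/2]` as a finite set of integers. -/
def window (N : ℕ) : Finset ℤ := Finset.Icc (-(N : ℤ) / 2 + 1) ((N : ℤ) / 2)

/-- The norm `|α̂|` of a coefficient vector indexed by the window. -/
def coefNorm (N : ℕ) (a : ℤ → ℂ) : ℝ := Real.sqrt (∑ k ∈ window N, ‖a k‖ ^ 2)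

/-! Every coefficient `α̂_{⟨m⟩_N}` has modulus at most `|α̂|`, so the `m`-th term of the sequence is
at most `(C_s N/(2π)) |α̂| R^{-|m|}`. The squares `R^{-2|m|}` form a two-sided geometric series with
sum `(1 + R⁻²)/(1 - R⁻²) = (R² + 1)/(R² - 1)`. -/

open Finset

lemma hasSum_pow_natAbs {r : ℝ} (h0 : 0 ≤ r) (h1 : r < 1) :
    HasSum (fun m : ℤ => r ^ m.natAbs) ((1 + r) / (1 - r)) := by
  have hpos : HasSum (fun n : ℕ => r ^ n) (1 - r)⁻¹ := hasSum_geometric_of_lt_one h0 h1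
  have hneg : HasSum (fun n : ℕ => r ^ (-((n : ℤ) + 1)).natAbs) (r * (1 - r)⁻¹) := by
    have hnatAbs : ∀ n : ℕ, (-((n : ℤ) + 1)).natAbs = n + 1 := fun n => by omega
    simpa only [hnatAbs, pow_succ'] using hpos.mul_left r
  convert HasSum.of_nat_of_neg_add_one (f := fun m : ℤ => r ^ m.natAbs) hpos hneg using 1
  field_simp [(sub_pos.2 h1).ne']

lemma hasSum_zpow_neg_abs_sq {R : ℝ} (hR : 1 < R) :
    HasSum (fun m : ℤ => (R ^ (-|m|)) ^ 2) ((R ^ 2 + 1) / (R ^ 2 - 1)) := by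
  have hR2 : 1 < R ^ 2 := one_lt_pow₀ hR two_ne_zero
  convert hasSum_pow_natAbs (r := (R ^ 2)⁻¹) (by positivity) (inv_lt_one_of_one_lt₀ hR2)
    using 1
  · ext m
    rw [← Int.natCast_natAbs, zpow_neg, zpow_natCast, inv_pow, inv_pow, ← pow_mul, ← pow_mul,
      mul_comm]
  · field_simp [(sub_pos.2 hR2).ne']

lemma summable_sq_norm_and_sqrt_tsum_le {E : Type*} [SeminormedAddCommGroup E] {u : ℤ → E}
    {K R : ℝ} (hR : 1 < R) (hu : ∀ m, ‖u m‖ ≤ K * R ^ (-|m|)) :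
    Summable (fun m => ‖u m‖ ^ 2) ∧
      Real.sqrt (∑' m, ‖u m‖ ^ 2) ≤ K * Real.sqrt ((R ^ 2 + 1) / (R ^ 2 - 1)) := by
  have hK : 0 ≤ K := by simpa using (norm_nonneg _).trans (hu 0)
  have hgeom := (hasSum_zpow_neg_abs_sq hR).mul_left (K ^ 2)
  have hterm : ∀ m, ‖u m‖ ^ 2 ≤ K ^ 2 * (R ^ (-|m|)) ^ 2 := fun m => by
    rw [← mul_pow]; exact pow_le_pow_left₀ (norm_nonneg _) (hu m) 2
  have hsum : Summable (fun m => ‖u m‖ ^ 2) :=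
    hgeom.summable.of_nonneg_of_le (fun _ => sq_nonneg _) hterm
  refine ⟨hsum, ?_⟩
  calc Real.sqrt (∑' m, ‖u m‖ ^ 2)
      ≤ Real.sqrt (K ^ 2 * ((R ^ 2 + 1) / (R ^ 2 - 1))) :=
        Real.sqrt_le_sqrt (hgeom.tsum_eq ▸ hsum.tsum_le_tsum hterm hgeom.summable)
    _ = K * Real.sqrt ((R ^ 2 + 1) / (R ^ 2 - 1)) := by
        rw [Real.sqrt_mul (sq_nonneg K), Real.sqrt_sq hK]

lemma winRep_mem_window {N : ℕ} (hN : Even N) (hN0 : 0 < N) (m : ℤ) :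
    winRep N m ∈ window N := by
  have hpos : (0 : ℤ) < N := by exact_mod_cast hN0
  obtain ⟨t, ht⟩ := hN
  have h1 := Int.emod_nonneg (m + (N : ℤ) / 2 - 1) hpos.ne'
  have h2 := Int.emod_lt_of_pos (m + (N : ℤ) / 2 - 1) hpos
  simp only [window, winRep, mem_Icc]
  omega

lemma norm_le_coefNorm {N : ℕ} (a : ℤ → ℂ) {k : ℤ} (hk : k ∈ window N) :
    ‖a k‖ ≤ coefNorm N a :=
  Real.le_sqrt_of_sq_le <| single_le_sum (f := fun k => ‖a k‖ ^ 2) (fun _ _ => sq_nonneg _) hk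

theorem mfs_Q_operator_bound_general
    (N : ℕ) (hNeven : Even N) (hN2 : 2 ≤ N)
    (R Cs : ℝ) (hR : 1 < R)
    (s : ℤ → ℂ) (hs : ∀ m : ℤ, ‖s m‖ ≤ Cs * R ^ (-|m|))
    (a : ℤ → ℂ) :
    Summable (fun m : ℤ => ‖((N : ℂ) / (2 * (Real.pi : ℂ))) * s m * a (winRep N m)‖ ^ 2) ∧
    Real.sqrt (∑' m : ℤ, ‖((N : ℂ) / (2 * (Real.pi : ℂ))) * s m * a (winRep N m)‖ ^ 2)
      ≤ (Cs * N / (2 * Real.pi)) * Real.sqrt ((R ^ 2 + 1) / (R ^ 2 - 1)) * coefNorm N a := by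
  have hc : ‖(N : ℂ) / (2 * (Real.pi : ℂ))‖ = N / (2 * Real.pi) := by
    simp [abs_of_pos Real.pi_pos]
  rw [mul_right_comm]
  refine summable_sq_norm_and_sqrt_tsum_le hR fun m => ?_
  have ha := norm_le_coefNorm a (winRep_mem_window hNeven (by omega) m)
  calc ‖(N : ℂ) / (2 * (Real.pi : ℂ)) * s m * a (winRep N m)‖
      = N / (2 * Real.pi) * ‖s m‖ * ‖a (winRep N m)‖ := by rw [norm_mul, norm_mul, hc]
    _ ≤ N / (2 * Real.pi) * (Cs * R ^ (-|m|)) * coefNorm N a := by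
        have hdecay : 0 ≤ Cs * R ^ (-|m|) := (norm_nonneg _).trans (hs m)
        gcongr
        exact hs m
    _ = Cs * N / (2 * Real.pi) * coefNorm N a * R ^ (-|m|) := by ring

/-- Bound `‖Q‖ ≤ (C_s N/(2π))·√((R²+1)/(R²−1))` on the operator mapping discrete MFS
Fourier coefficients to boundary Fourier coefficients. -/
theorem mfs_Q_operator_bound
    (N : ℕ) (hNeven : Even N) (hN2 : 2 ≤ N)
    (R Cs : ℝ) (hR : 1 < R) (hCs : 0 < Cs)
    (s : ℤ → ℂ) (hs : ∀ m : ℤ, ‖s m‖ ≤ Cs * R ^ (-|m|))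
    (a : ℤ → ℂ) :
    Summable (fun m : ℤ => ‖((N : ℂ) / (2 * (Real.pi : ℂ))) * s m * a (winRep N m)‖ ^ 2) ∧
    Real.sqrt (∑' m : ℤ, ‖((N : ℂ) / (2 * (Real.pi : ℂ))) * s m * a (winRep N m)‖ ^ 2)
      ≤ (Cs * N / (2 * Real.pi)) * Real.sqrt ((R ^ 2 + 1) / (R ^ 2 - 1)) * coefNorm N a :=
  mfs_Q_operator_bound_general N hNeven hN2 R Cs hR s hs a
end
end

section
/- Assume the MFS setup with eigenvalue bounds (H_s) and boundary-data decay |v̂(m)| ≤ C_v·ρ^{−|m|} for all m ∈ ℤ, where 1 < ρ < R². Then there exists a constant C > 0, depending on R, ρ, c_s, C_s, C_v (and on ŝ(0), v̂(0)) but not on N, such that for every even integer N ≥ 2 there exists a coefficient vector α̂ ∈ ℂ^N with boundary error t(α̂) ≤ C·ρ^{−N/2}. -/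
open scoped BigOperators ENNReal NNReal

noncomputable section

/-- The boundary error norm
`t(α̂) = (2π·∑_{m∈ℤ} |(N/(2π))·ŝ(m)·α̂_{⟨m⟩_N} − v̂(m)|²)^{1/2}`, valued in `[0,∞]`. -/
def tErr (N : ℕ) (s v a : ℤ → ℂ) : ℝ≥0∞ :=
  (ENNReal.ofReal (2 * Real.pi) *
    ∑' m : ℤ, (‖((N : ℂ) / (2 * (Real.pi : ℂ))) * s m * a (winRep N m) - v m‖₊ : ℝ≥0∞) ^ 2)
    ^ (1 / 2 : ℝ)

/-!
Take `α̂_k = (2π/N) v̂(k)/ŝ(k)`. It interpolates the data on the window, so the only error comes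
from the aliased modes `m ≡ k (mod N)`, `m ≠ k`, and there it is `ŝ(m) v̂(k)/ŝ(k) - v̂(m)`.
For these modes `|m| ≥ N/2` and `|m| + |k| ≥ N`. The eigenvalue bounds give
`|ŝ(m)/ŝ(k)| ≲ R^{|k|-|m|}`, so both parts of the error are `≲ ρ^{-N/2} σ^{N/2-|m|}`
with `σ = min(R²/ρ, ρ) > 1`; this is where `ρ < R²` enters. Summing the squares over
`|m| ≥ N/2` gives a geometric series whose sum does not depend on `N`.
-/

theorem mem_window_two_mul_iff (M : ℕ) (m : ℤ) :
    m ∈ window (2 * M) ↔ -(M : ℤ) < m ∧ m ≤ M := by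
  simp only [window, Finset.mem_Icc]
  omega

theorem dvd_sub_winRep (N : ℕ) (m : ℤ) : (N : ℤ) ∣ m - winRep N m := by
  refine ⟨(m + (N : ℤ) / 2 - 1) / N, ?_⟩
  have := Int.mul_ediv_add_emod (m + (N : ℤ) / 2 - 1) N
  simp only [winRep]
  linarith

theorem winRep_mem_window_s1 {M : ℕ} (hM : 0 < M) (m : ℤ) :
    winRep (2 * M) m ∈ window (2 * M) := by
  have hN : (0 : ℤ) < (2 * M : ℕ) := by omega
  have h0 := Int.emod_nonneg (m + ((2 * M : ℕ) : ℤ) / 2 - 1) hN.ne'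
  have h1 := Int.emod_lt_of_pos (m + ((2 * M : ℕ) : ℤ) / 2 - 1) hN
  rw [mem_window_two_mul_iff, winRep]
  omega

theorem winRep_eq_of_mem_window {M : ℕ} (hM : 0 < M) {m : ℤ} (hm : m ∈ window (2 * M)) :
    winRep (2 * M) m = m := by
  have hk := (mem_window_two_mul_iff M _).1 (winRep_mem_window_s1 hM m)
  rw [mem_window_two_mul_iff] at hm
  have := Int.eq_zero_of_abs_lt_dvd (dvd_sub_winRep (2 * M) m)
    (by rw [abs_lt]; push_cast; omega)
  omega

theorem le_abs_add_abs_winRep {M : ℕ} (hM : 0 < M) {m : ℤ} (hm : m ∉ window (2 * M)) :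
    2 * (M : ℤ) ≤ |m| + |winRep (2 * M) m| := by
  have hk := winRep_mem_window_s1 hM m
  have hne : m - winRep (2 * M) m ≠ 0 := fun h => hm (by rwa [← sub_eq_zero.1 h] at hk)
  calc 2 * (M : ℤ) ≤ |m - winRep (2 * M) m| := by
        have := Int.le_of_dvd (abs_pos.2 hne) ((dvd_abs _ _).2 (dvd_sub_winRep (2 * M) m))
        push_cast at this
        exact this
    _ ≤ |m| + |winRep (2 * M) m| := abs_sub _ _

theorem le_abs_of_notMem_window {M : ℕ} {m : ℤ} (hm : m ∉ window (2 * M)) :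
    (M : ℤ) ≤ |m| := by
  rw [mem_window_two_mul_iff] at hm
  rcases abs_cases m with h | h <;> omega

theorem abs_winRep_le {M : ℕ} (hM : 0 < M) (m : ℤ) : |winRep (2 * M) m| ≤ M := by
  have := (mem_window_two_mul_iff M _).1 (winRep_mem_window_s1 hM m)
  rw [abs_le]; omega

theorem norm_div_le_of_eigenvalue_bounds {R cs Cs : ℝ} {s : ℤ → ℂ} (hR : 0 < R) (hcs : 0 < cs)
    (hCs : 0 ≤ Cs) (hs0 : s 0 ≠ 0)
    (hsl : ∀ m : ℤ, m ≠ 0 → cs / |(m : ℝ)| * R ^ (-|m|) ≤ ‖s m‖)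
    (hsu : ∀ m : ℤ, m ≠ 0 → ‖s m‖ ≤ Cs / |(m : ℝ)| * R ^ (-|m|))
    {k m : ℤ} (hm : m ≠ 0) (hkm : |k| ≤ |m|) :
    ‖s m / s k‖ ≤ max (Cs / cs) (Cs / ‖s 0‖) * R ^ (|k| - |m|) := by
  have hRk : R ^ (-|k|) * R ^ (|k| - |m|) = R ^ (-|m|) := by
    rw [← zpow_add₀ hR.ne']; ring_nf
  have hm' : (0 : ℝ) < |(m : ℝ)| := by positivity
  rcases eq_or_ne k 0 with rfl | hk
  · have hs0' : 0 < ‖s 0‖ := norm_pos_iff.2 hs0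
    have h1 : (1 : ℝ) ≤ |(m : ℝ)| := by
      rw [← Int.cast_abs]; exact_mod_cast Int.one_le_abs hm
    rw [norm_div, div_le_iff₀ hs0']
    calc ‖s m‖ ≤ Cs / |(m : ℝ)| * R ^ (-|m|) := hsu m hm
      _ ≤ Cs / 1 * R ^ (-|m|) := by gcongr
      _ = Cs / ‖s 0‖ * R ^ (|(0 : ℤ)| - |m|) * ‖s 0‖ := by
          rw [abs_zero, zero_sub]; field_simp
      _ ≤ _ := by gcongr; exact le_max_right _ _
  · have hk' : (0 : ℝ) < |(k : ℝ)| := by positivity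
    have hsk : cs / |(k : ℝ)| * R ^ (-|k|) ≤ ‖s k‖ := hsl k hk
    have hsk0 : 0 < ‖s k‖ := lt_of_lt_of_le (by positivity) hsk
    have hkm' : |(k : ℝ)| ≤ |(m : ℝ)| := by
      simpa only [← Int.cast_abs] using Int.cast_le.2 hkm
    rw [norm_div, div_le_iff₀ hsk0]
    calc ‖s m‖ ≤ Cs / |(m : ℝ)| * R ^ (-|m|) := hsu m hm
      _ ≤ Cs / |(k : ℝ)| * R ^ (-|m|) := by gcongr
      _ = Cs / cs * R ^ (|k| - |m|) * (cs / |(k : ℝ)| * R ^ (-|k|)) := by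
          rw [← hRk]; field_simp
      _ ≤ _ := by gcongr; exact le_max_left _ _

theorem zpow_sub_mul_zpow_neg_le {R ρ σ : ℝ} (hR : 0 < R) (hρ : 0 < ρ) (hσ : 0 < σ)
    (hσρ : σ ≤ ρ) (hσR : σ * ρ ≤ R ^ 2) {K M m : ℤ} (hK : K ≤ M) (hMm : 2 * M ≤ m + K) :
    R ^ (K - m) * ρ ^ (-K) ≤ ρ ^ (-M) * σ ^ (M - m) := by
  rw [← Real.log_le_log_iff (by positivity) (by positivity), Real.log_mul (by positivity)
    (by positivity), Real.log_mul (by positivity) (by positivity), Real.log_zpow, Real.log_zpow,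
    Real.log_zpow, Real.log_zpow]
  have hlσρ : Real.log σ ≤ Real.log ρ := Real.log_le_log hσ hσρ
  have hlσR : Real.log σ + Real.log ρ ≤ 2 * Real.log R := by
    have := Real.log_le_log (by positivity) hσR
    rwa [Real.log_mul hσ.ne' hρ.ne', Real.log_pow, Nat.cast_ofNat] at this
  have hK' : (0 : ℝ) ≤ M - K := by exact_mod_cast sub_nonneg.2 hK
  have hMm' : (0 : ℝ) ≤ m + K - 2 * M := by exact_mod_cast sub_nonneg.2 hMm
  push_cast
  -- the gap is `(M - K) (2 log R - log ρ - log σ) + (m + K - 2M) (log R - log σ)`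
  nlinarith [mul_nonneg hK' (by linarith : 0 ≤ 2 * Real.log R - Real.log ρ - Real.log σ),
    mul_nonneg hMm' (by linarith : 0 ≤ Real.log R - Real.log σ)]

theorem zpow_neg_le_zpow_neg_mul_zpow {ρ σ : ℝ} (hσ : 0 < σ) (hσρ : σ ≤ ρ) {M m : ℤ}
    (hMm : M ≤ m) : ρ ^ (-m) ≤ ρ ^ (-M) * σ ^ (M - m) := by
  have hρ : 0 < ρ := hσ.trans_le hσρ
  rw [← Real.log_le_log_iff (by positivity) (by positivity), Real.log_mul (by positivity)
    (by positivity), Real.log_zpow, Real.log_zpow, Real.log_zpow]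
  have hlσρ : Real.log σ ≤ Real.log ρ := Real.log_le_log hσ hσρ
  have hMm' : (0 : ℝ) ≤ m - M := by exact_mod_cast sub_nonneg.2 hMm
  push_cast
  nlinarith [mul_nonneg hMm' (sub_nonneg.2 hlσρ)]

theorem sq_zpow_le_zpow_abs_sub_add_zpow_abs_add {σ : ℝ} {M m : ℤ} (hMm : M ≤ |m|) :
    (σ ^ (M - |m|)) ^ 2 ≤ (σ ^ 2)⁻¹ ^ |m - M| + (σ ^ 2)⁻¹ ^ |m + M| := by
  have hsq : (σ ^ (M - |m|)) ^ 2 = (σ ^ 2)⁻¹ ^ (|m| - M) := by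
    rw [inv_zpow', ← zpow_natCast, ← zpow_natCast, ← zpow_mul, ← zpow_mul]
    ring_nf
  have h1 := zpow_nonneg (inv_nonneg.2 (sq_nonneg σ)) |m - M|
  have h2 := zpow_nonneg (inv_nonneg.2 (sq_nonneg σ)) |m + M|
  rw [hsq]
  rcases abs_cases m with ⟨hm, -⟩ | ⟨hm, -⟩
  · rw [hm, abs_of_nonneg (by omega : 0 ≤ m - M)]; linarith
  · rw [hm, abs_of_nonpos (by omega : m + M ≤ 0), neg_add']; linarith

theorem summable_zpow_abs {w : ℝ} (hw0 : 0 ≤ w) (hw1 : w < 1) :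
    Summable fun m : ℤ => w ^ |m| := by
  have hgeom := summable_geometric_of_lt_one hw0 hw1
  refine Summable.of_nat_of_neg ?_ ?_ <;>
    simpa only [abs_neg, Nat.abs_cast, zpow_natCast] using hgeom

theorem hasSum_zpow_abs_sub_add_zpow_abs_add {w : ℝ} (hw0 : 0 ≤ w) (hw1 : w < 1) (M : ℤ) :
    HasSum (fun m : ℤ => w ^ |m - M| + w ^ |m + M|) (2 * ∑' m : ℤ, w ^ |m|) := by
  have h := (summable_zpow_abs hw0 hw1).hasSum
  have hsub : HasSum (fun m : ℤ => w ^ |m - M|) (∑' m : ℤ, w ^ |m|) :=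
    (Equiv.subRight M).hasSum_iff (f := fun m : ℤ => w ^ |m|) |>.2 h
  have hadd : HasSum (fun m : ℤ => w ^ |m + M|) (∑' m : ℤ, w ^ |m|) :=
    (Equiv.addRight M).hasSum_iff (f := fun m : ℤ => w ^ |m|) |>.2 h
  rw [two_mul]
  exact hsub.add hadd

theorem tErr_le_of_hasSum {N : ℕ} {s v a : ℤ → ℂ} {g : ℤ → ℝ} {B : ℝ} (hg : HasSum g B)
    (h : ∀ m, ‖(N : ℂ) / (2 * (Real.pi : ℂ)) * s m * a (winRep N m) - v m‖ ^ 2 ≤ g m) :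
    tErr N s v a ≤ ENNReal.ofReal (√(2 * Real.pi * B)) := by
  have hg0 : ∀ m, 0 ≤ g m := fun m => (sq_nonneg _).trans (h m)
  have hB : 0 ≤ B := hg.nonneg hg0
  have hsum : ∑' m : ℤ,
      (‖(N : ℂ) / (2 * (Real.pi : ℂ)) * s m * a (winRep N m) - v m‖₊ : ℝ≥0∞) ^ 2 ≤
        ENNReal.ofReal B := by
    rw [← hg.tsum_eq, ENNReal.ofReal_tsum_of_nonneg hg0 hg.summable]
    refine ENNReal.tsum_le_tsum fun m => ?_
    rw [← enorm_eq_nnnorm, ← ofReal_norm, ← ENNReal.ofReal_pow (norm_nonneg _)]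
    exact ENNReal.ofReal_le_ofReal (h m)
  rw [tErr, Real.sqrt_eq_rpow, ← ENNReal.ofReal_rpow_of_nonneg (by positivity) (by norm_num),
    ENNReal.ofReal_mul (q := B) (by positivity)]
  gcongr

def collocationCoef (N : ℕ) (s v : ℤ → ℂ) (k : ℤ) : ℂ := 2 * Real.pi / N * (v k / s k)

theorem residual_collocationCoef {N : ℕ} (hN : N ≠ 0) (s v : ℤ → ℂ) (m k : ℤ) :
    (N : ℂ) / (2 * (Real.pi : ℂ)) * s m * collocationCoef N s v k - v m =
      s m / s k * v k - v m := by
  have hπ : (Real.pi : ℂ) ≠ 0 := Complex.ofReal_ne_zero.2 Real.pi_ne_zero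
  simp only [collocationCoef]
  field_simp

theorem norm_residual_le {R ρ σ cs Cs Cv : ℝ} {s v : ℤ → ℂ} (hR : 0 < R) (hσ : 0 < σ)
    (hσρ : σ ≤ ρ) (hσR : σ * ρ ≤ R ^ 2) (hcs : 0 < cs) (hCs : 0 ≤ Cs) (hCv : 0 ≤ Cv)
    (hs0 : s 0 ≠ 0)
    (hsl : ∀ m : ℤ, m ≠ 0 → cs / |(m : ℝ)| * R ^ (-|m|) ≤ ‖s m‖)
    (hsu : ∀ m : ℤ, m ≠ 0 → ‖s m‖ ≤ Cs / |(m : ℝ)| * R ^ (-|m|))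
    (hv : ∀ m : ℤ, ‖v m‖ ≤ Cv * ρ ^ (-|m|)) {M : ℕ} (hM : 0 < M) {m : ℤ}
    (hm : m ∉ window (2 * M)) :
    ‖s m / s (winRep (2 * M) m) * v (winRep (2 * M) m) - v m‖ ≤
      (max (Cs / cs) (Cs / ‖s 0‖) + 1) * Cv * (ρ ^ (-(M : ℤ)) * σ ^ ((M : ℤ) - |m|)) := by
  set k := winRep (2 * M) m
  set E := max (Cs / cs) (Cs / ‖s 0‖)
  have hρ : 0 < ρ := hσ.trans_le hσρ
  have hE : 0 ≤ E := le_max_of_le_left (by positivity)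
  have hMm : (M : ℤ) ≤ |m| := le_abs_of_notMem_window hm
  have hkM : |k| ≤ M := abs_winRep_le hM m
  have h2M : 2 * (M : ℤ) ≤ |m| + |k| := le_abs_add_abs_winRep hM hm
  have hm0 : m ≠ 0 := by rintro rfl; simp at hMm; omega
  have hratio : ‖s m / s k‖ ≤ E * R ^ (|k| - |m|) :=
    norm_div_le_of_eigenvalue_bounds hR hcs hCs hs0 hsl hsu hm0 (hkM.trans hMm)
  calc ‖s m / s k * v k - v m‖ ≤ ‖s m / s k‖ * ‖v k‖ + ‖v m‖ :=
        (norm_sub_le _ _).trans_eq (by rw [norm_mul])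
    _ ≤ E * R ^ (|k| - |m|) * (Cv * ρ ^ (-|k|)) + Cv * ρ ^ (-|m|) :=
        add_le_add (mul_le_mul hratio (hv k) (norm_nonneg _) ((norm_nonneg _).trans hratio))
          (hv m)
    _ = E * Cv * (R ^ (|k| - |m|) * ρ ^ (-|k|)) + Cv * ρ ^ (-|m|) := by ring
    _ ≤ E * Cv * (ρ ^ (-(M : ℤ)) * σ ^ ((M : ℤ) - |m|)) +
          Cv * (ρ ^ (-(M : ℤ)) * σ ^ ((M : ℤ) - |m|)) := by
        gcongr E * Cv * ?_ + Cv * ?_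
        · exact zpow_sub_mul_zpow_neg_le hR hρ hσ hσρ hσR hkM h2M
        · exact zpow_neg_le_zpow_neg_mul_zpow hσ hσρ hMm
    _ = (E + 1) * Cv * (ρ ^ (-(M : ℤ)) * σ ^ ((M : ℤ) - |m|)) := by ring

theorem norm_sq_residual_collocationCoef_le {R ρ σ cs Cs Cv : ℝ} {s v : ℤ → ℂ} (hR : 0 < R)
    (hσ : 0 < σ) (hσρ : σ ≤ ρ) (hσR : σ * ρ ≤ R ^ 2) (hcs : 0 < cs) (hCs : 0 ≤ Cs)
    (hCv : 0 ≤ Cv) (hs0 : s 0 ≠ 0)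
    (hsl : ∀ m : ℤ, m ≠ 0 → cs / |(m : ℝ)| * R ^ (-|m|) ≤ ‖s m‖)
    (hsu : ∀ m : ℤ, m ≠ 0 → ‖s m‖ ≤ Cs / |(m : ℝ)| * R ^ (-|m|))
    (hv : ∀ m : ℤ, ‖v m‖ ≤ Cv * ρ ^ (-|m|)) {M : ℕ} (hM : 0 < M) (m : ℤ) :
    ‖((2 * M : ℕ) : ℂ) / (2 * (Real.pi : ℂ)) * s m *
        collocationCoef (2 * M) s v (winRep (2 * M) m) - v m‖ ^ 2 ≤
      ((max (Cs / cs) (Cs / ‖s 0‖) + 1) * Cv * ρ ^ (-(M : ℤ))) ^ 2 *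
        ((σ ^ 2)⁻¹ ^ |m - M| + (σ ^ 2)⁻¹ ^ |m + M|) := by
  rw [residual_collocationCoef (by omega)]
  by_cases hm : m ∈ window (2 * M)
  · have hsm : s m ≠ 0 := by
      rcases eq_or_ne m 0 with rfl | hm0
      · exact hs0
      · exact norm_pos_iff.1 (lt_of_lt_of_le (by positivity) (hsl m hm0))
    rw [winRep_eq_of_mem_window hM hm, div_self hsm, one_mul, sub_self, norm_zero,
      zero_pow two_ne_zero]
    positivity
  · calc _ ≤ ((max (Cs / cs) (Cs / ‖s 0‖) + 1) * Cv *
            (ρ ^ (-(M : ℤ)) * σ ^ ((M : ℤ) - |m|))) ^ 2 :=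
          pow_le_pow_left₀ (norm_nonneg _)
            (norm_residual_le hR hσ hσρ hσR hcs hCs hCv hs0 hsl hsu hv hM hm) 2
      _ = ((max (Cs / cs) (Cs / ‖s 0‖) + 1) * Cv * ρ ^ (-(M : ℤ))) ^ 2 *
            (σ ^ ((M : ℤ) - |m|)) ^ 2 := by ring
      _ ≤ _ := by
          gcongr
          exact sq_zpow_le_zpow_abs_sub_add_zpow_abs_add (le_abs_of_notMem_window hm)

theorem mfs_convergence_rho_lt_Rsq_general
    (R ρ cs Cs Cv : ℝ) (hR : 1 < R) (hρ1 : 1 < ρ) (hρ2 : ρ < R ^ 2)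
    (hcs : 0 < cs) (hcsCs : cs ≤ Cs) (hCv : 0 < Cv)
    (s v : ℤ → ℂ)
    (hs0 : s 0 ≠ 0)
    (hsl : ∀ m : ℤ, m ≠ 0 → cs / |(m : ℝ)| * R ^ (-|m|) ≤ ‖s m‖)
    (hsu : ∀ m : ℤ, m ≠ 0 → ‖s m‖ ≤ Cs / |(m : ℝ)| * R ^ (-|m|))
    (hv : ∀ m : ℤ, ‖v m‖ ≤ Cv * ρ ^ (-|m|)) :
    ∃ C : ℝ, 0 < C ∧ ∀ N : ℕ, Even N → 2 ≤ N →
      ∃ a : ℤ → ℂ, tErr N s v a ≤ ENNReal.ofReal (C * ρ ^ (-(N : ℝ) / 2)) := by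
  set σ := min (R ^ 2 / ρ) ρ
  have hσ : 1 < σ := lt_min ((one_lt_div (by linarith)).2 hρ2) hρ1
  have hσR : σ * ρ ≤ R ^ 2 := (le_div_iff₀ (by linarith)).1 (min_le_left _ _)
  have hw0 : 0 ≤ (σ ^ 2)⁻¹ := by positivity
  have hw1 : (σ ^ 2)⁻¹ < 1 := inv_lt_one_of_one_lt₀ (one_lt_pow₀ hσ two_ne_zero)
  have hCs : 0 ≤ Cs := hcs.le.trans hcsCs
  set D := (max (Cs / cs) (Cs / ‖s 0‖) + 1) * Cv
  have hD : 0 < D := mul_pos (by positivity [le_max_left (Cs / cs) (Cs / ‖s 0‖)]) hCv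
  set S := ∑' m : ℤ, (σ ^ 2)⁻¹ ^ |m|
  have hS : 0 < S := (summable_zpow_abs hw0 hw1).tsum_pos (fun _ => zpow_nonneg hw0 _) 0 (by simp)
  refine ⟨√(2 * Real.pi * (2 * S)) * D, by positivity, ?_⟩
  rintro N ⟨M, rfl⟩ hN
  rw [← two_mul] at hN ⊢
  refine ⟨collocationCoef (2 * M) s v, (tErr_le_of_hasSum
    ((hasSum_zpow_abs_sub_add_zpow_abs_add hw0 hw1 M).mul_left _)
    (norm_sq_residual_collocationCoef_le (by linarith) (by linarith) (min_le_right _ _) hσR hcs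
      hCs hCv.le hs0 hsl hsu hv (by omega))).trans_eq ?_⟩
  have hρM : ρ ^ (-((2 * M : ℕ) : ℝ) / 2) = ρ ^ (-(M : ℤ)) := by
    rw [← Real.rpow_intCast]; push_cast; ring_nf
  rw [hρM, show 2 * Real.pi * ((D * ρ ^ (-(M : ℤ))) ^ 2 * (2 * S)) =
      2 * Real.pi * (2 * S) * (D * ρ ^ (-(M : ℤ))) ^ 2 by ring,
    Real.sqrt_mul (by positivity), Real.sqrt_sq (by positivity), mul_assoc √(2 * Real.pi * (2 * S))]

/-- MFS convergence on the unit disc, case `ρ < R²`: rate `ρ^{-N/2}`. -/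
theorem mfs_convergence_rho_lt_Rsq
    (R ρ cs Cs Cv : ℝ) (hR : 1 < R) (hρ1 : 1 < ρ) (hρ2 : ρ < R ^ 2)
    (hcs : 0 < cs) (hcsCs : cs ≤ Cs) (hCv : 0 < Cv)
    (s v : ℤ → ℂ)
    (hs0 : s 0 ≠ 0) (hs0' : ‖s 0‖ ≤ Cs)
    (hsl : ∀ m : ℤ, m ≠ 0 → cs / |(m : ℝ)| * R ^ (-|m|) ≤ ‖s m‖)
    (hsu : ∀ m : ℤ, m ≠ 0 → ‖s m‖ ≤ Cs / |(m : ℝ)| * R ^ (-|m|))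
    (hv : ∀ m : ℤ, ‖v m‖ ≤ Cv * ρ ^ (-|m|)) :
    ∃ C : ℝ, 0 < C ∧ ∀ N : ℕ, Even N → 2 ≤ N →
      ∃ a : ℤ → ℂ, tErr N s v a ≤ ENNReal.ofReal (C * ρ ^ (-(N : ℝ) / 2)) :=
  mfs_convergence_rho_lt_Rsq_general R ρ cs Cs Cv hR hρ1 hρ2 hcs hcsCs hCv s v hs0 hsl hsu hv
end
end

section
/- Assume the MFS setup with eigenvalue bounds (H_s), and suppose the boundary data is entire in the sense that for every σ > 1 there exists C_σ > 0 with |v̂(m)| ≤ C_σ·σ^{−|m|} for all m ∈ ℤ. Then for any R > 1 there exists a constant C > 0, independent of N, such that for every even integer N ≥ 2 there exists a coefficient vector α̂ ∈ ℂ^N with boundary error t(α̂) ≤ C·R^{−N}. -/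
/-! With `α̂_k = (2π/N)·v̂(k)/ŝ(k)` the residual vanishes on the window. Outside it, writing
`k = ⟨m⟩_N`, the residual is `ŝ(m)v̂(k)/ŝ(k) − v̂(m)`; the eigenvalue bounds and the decay
`|v̂(k)| ≲ R^{-3|k|}` (available because the data is entire) bound it by `R^{-(|m|+2|k|)}`.
As `N ∣ m − k`, `|m| + |k| ≥ N`, so `|m| + 2|k| ≥ N + ||m| − N|` and the squared residuals
sum to `O(R^{-2N})`. -/

open scoped BigOperators ENNReal NNReal

noncomputable section

namespace MFS

lemma mem_window_iff {N : ℕ} {k : ℤ} :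
    k ∈ window N ↔ -(N : ℤ) / 2 + 1 ≤ k ∧ k ≤ (N : ℤ) / 2 := Finset.mem_Icc

lemma winRep_mem_window {N : ℕ} (hN : Even N) (hN0 : 0 < N) (m : ℤ) :
    winRep N m ∈ window N := by
  obtain ⟨t, rfl⟩ := hN
  have hpos : (0 : ℤ) < ((t + t : ℕ) : ℤ) := by exact_mod_cast hN0
  have h1 := Int.emod_nonneg (m + ((t + t : ℕ) : ℤ) / 2 - 1) hpos.ne'
  have h2 := Int.emod_lt_of_pos (m + ((t + t : ℕ) : ℤ) / 2 - 1) hpos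
  rw [mem_window_iff, winRep]
  omega

lemma winRep_eq_self {N : ℕ} (hN : Even N) {m : ℤ} (hm : m ∈ window N) : winRep N m = m := by
  obtain ⟨t, rfl⟩ := hN
  rw [mem_window_iff] at hm
  rw [winRep, Int.emod_eq_of_lt (by omega) (by omega)]
  omega

lemma dvd_sub_winRep (N : ℕ) (m : ℤ) : (N : ℤ) ∣ m - winRep N m := by
  have := Int.mul_ediv_add_emod (m + (N : ℤ) / 2 - 1) N
  exact ⟨(m + (N : ℤ) / 2 - 1) / N, by rw [winRep]; omega⟩

lemma natAbs_winRep_le {N : ℕ} (hN : Even N) (hN0 : 0 < N) (m : ℤ) :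
    (winRep N m).natAbs ≤ m.natAbs := by
  by_cases hm : m ∈ window N
  · rw [winRep_eq_self hN hm]
  · have hk := mem_window_iff.mp (winRep_mem_window hN hN0 m)
    rw [mem_window_iff] at hm
    obtain ⟨t, rfl⟩ := hN
    omega

lemma le_natAbs_add_natAbs_winRep {N : ℕ} (hN : Even N) (hN0 : 0 < N) {m : ℤ}
    (hm : m ∉ window N) : N ≤ m.natAbs + (winRep N m).natAbs := by
  have hne : m - winRep N m ≠ 0 :=
    sub_ne_zero.mpr fun h ↦ hm (h ▸ winRep_mem_window hN hN0 m)
  have := Int.natAbs_le_of_dvd_ne_zero (dvd_sub_winRep N m) hne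
  omega

lemma zpow_neg_abs {α : Type*} [DivisionRing α] (R : α) (m : ℤ) :
    R ^ (-|m|) = R⁻¹ ^ m.natAbs := by
  rw [Int.abs_eq_natAbs, zpow_neg, zpow_natCast, inv_pow]

lemma div_abs_mul_zpow_neg_abs (c R : ℝ) (m : ℤ) :
    c / |(m : ℝ)| * R ^ (-|m|) = c / m.natAbs * R⁻¹ ^ m.natAbs := by
  rw [zpow_neg_abs, Nat.cast_natAbs, Int.cast_abs]

section Eigenvalues

variable {𝕜 : Type*} [NormedField 𝕜] {s v : ℤ → 𝕜} {r c C Cv : ℝ}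

lemma exists_pos_forall_le_norm (hr : 0 ≤ r) (hc : 0 < c) (hs0 : s 0 ≠ 0)
    (hsl : ∀ m : ℤ, m ≠ 0 → c / m.natAbs * r ^ m.natAbs ≤ ‖s m‖) :
    ∃ c' > 0, ∀ k : ℤ, c' / max 1 (k.natAbs : ℝ) * r ^ k.natAbs ≤ ‖s k‖ := by
  refine ⟨min c ‖s 0‖, lt_min hc (norm_pos_iff.mpr hs0), fun k ↦ ?_⟩
  rcases eq_or_ne k 0 with rfl | hk
  · simp
  · have hk1 : (1 : ℝ) ≤ k.natAbs := by exact_mod_cast Int.natAbs_pos.mpr hk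
    rw [max_eq_right hk1]
    exact le_trans (by gcongr; exact min_le_left _ _) (hsl k hk)

lemma norm_mul_div_le (hr : 0 < r) (hc : 0 < c) (hC : 0 ≤ C) (hCv : 0 ≤ Cv)
    (hsl : ∀ k : ℤ, c / max 1 (k.natAbs : ℝ) * r ^ k.natAbs ≤ ‖s k‖)
    (hsu : ∀ m : ℤ, m ≠ 0 → ‖s m‖ ≤ C / m.natAbs * r ^ m.natAbs)
    (hv : ∀ m : ℤ, ‖v m‖ ≤ Cv * (r ^ 3) ^ m.natAbs) {m k : ℤ} (hm : m ≠ 0)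
    (hkm : k.natAbs ≤ m.natAbs) :
    ‖s m * (v k / s k)‖ ≤ C / c * Cv * r ^ (m.natAbs + 2 * k.natAbs) := by
  have hsk : 0 < ‖s k‖ := lt_of_lt_of_le (by positivity) (hsl k)
  have hm1 : (1 : ℝ) ≤ m.natAbs := by exact_mod_cast Int.natAbs_pos.mpr hm
  have hmax : max 1 (k.natAbs : ℝ) / m.natAbs ≤ 1 :=
    (div_le_one (by linarith)).mpr (max_le hm1 (by exact_mod_cast hkm))
  rw [norm_mul, norm_div, ← mul_div_assoc, div_le_iff₀ hsk]
  calc ‖s m‖ * ‖v k‖ ≤ C / m.natAbs * r ^ m.natAbs * (Cv * (r ^ 3) ^ k.natAbs) :=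
        mul_le_mul (hsu m hm) (hv k) (norm_nonneg _) (by positivity)
    _ = C / c * Cv * r ^ (m.natAbs + 2 * k.natAbs) * (max 1 (k.natAbs : ℝ) / m.natAbs) *
          (c / max 1 (k.natAbs : ℝ) * r ^ k.natAbs) := by
        field_simp
        ring
    _ ≤ C / c * Cv * r ^ (m.natAbs + 2 * k.natAbs) * ‖s k‖ :=
        mul_le_mul (mul_le_of_le_one_right (by positivity) hmax) (hsl k) (by positivity)
          (by positivity)

lemma norm_mul_div_sub_le (hr : 0 < r) (hr1 : r ≤ 1) (hc : 0 < c) (hC : 0 ≤ C) (hCv : 0 ≤ Cv)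
    (hsl : ∀ k : ℤ, c / max 1 (k.natAbs : ℝ) * r ^ k.natAbs ≤ ‖s k‖)
    (hsu : ∀ m : ℤ, m ≠ 0 → ‖s m‖ ≤ C / m.natAbs * r ^ m.natAbs)
    (hv : ∀ m : ℤ, ‖v m‖ ≤ Cv * (r ^ 3) ^ m.natAbs) {m k : ℤ} (hm : m ≠ 0)
    (hkm : k.natAbs ≤ m.natAbs) :
    ‖s m * (v k / s k) - v m‖ ≤ (C / c * Cv + Cv) * r ^ (m.natAbs + 2 * k.natAbs) := by
  have hvm : ‖v m‖ ≤ Cv * r ^ (m.natAbs + 2 * k.natAbs) :=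
    calc ‖v m‖ ≤ Cv * r ^ (3 * m.natAbs) := by rw [pow_mul]; exact hv m
      _ ≤ Cv * r ^ (m.natAbs + 2 * k.natAbs) :=
        mul_le_mul_of_nonneg_left (pow_le_pow_of_le_one hr.le hr1 (by omega)) hCv
  calc ‖s m * (v k / s k) - v m‖ ≤ ‖s m * (v k / s k)‖ + ‖v m‖ := norm_sub_le _ _
    _ ≤ _ := by
        rw [add_mul]
        exact add_le_add (norm_mul_div_le hr hc hC hCv hsl hsu hv hm hkm) hvm

end Eigenvalues

def residual (N : ℕ) (s v a : ℤ → ℂ) (m : ℤ) : ℂ :=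
  ((N : ℂ) / (2 * (Real.pi : ℂ))) * s m * a (winRep N m) - v m

def interpCoeff (N : ℕ) (s v : ℤ → ℂ) (k : ℤ) : ℂ := 2 * (Real.pi : ℂ) / N * (v k / s k)

lemma residual_interpCoeff {N : ℕ} (hN : N ≠ 0) (s v : ℤ → ℂ) (m : ℤ) :
    residual N s v (interpCoeff N s v) m = s m * (v (winRep N m) / s (winRep N m)) - v m := by
  have : (N : ℂ) ≠ 0 := Nat.cast_ne_zero.mpr hN
  simp only [residual, interpCoeff]
  field_simp

lemma norm_residual_interpCoeff_le {N : ℕ} (hN : Even N) (hN0 : 0 < N) {s v : ℤ → ℂ}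
    {r c C Cv : ℝ} (hr : 0 < r) (hr1 : r ≤ 1) (hc : 0 < c) (hC : 0 ≤ C) (hCv : 0 ≤ Cv)
    (hsl : ∀ k : ℤ, c / max 1 (k.natAbs : ℝ) * r ^ k.natAbs ≤ ‖s k‖)
    (hsu : ∀ m : ℤ, m ≠ 0 → ‖s m‖ ≤ C / m.natAbs * r ^ m.natAbs)
    (hv : ∀ m : ℤ, ‖v m‖ ≤ Cv * (r ^ 3) ^ m.natAbs) (m : ℤ) :
    ‖residual N s v (interpCoeff N s v) m‖ ≤
      (C / c * Cv + Cv) * r ^ N * r ^ Nat.dist m.natAbs N := by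
  rw [residual_interpCoeff hN0.ne']
  by_cases hm : m ∈ window N
  · have hsm : s m ≠ 0 := norm_pos_iff.mp (lt_of_lt_of_le (by positivity) (hsl m))
    rw [winRep_eq_self hN hm, mul_div_cancel₀ _ hsm, sub_self, norm_zero]
    positivity
  have hkm := natAbs_winRep_le hN hN0 m
  have hsum := le_natAbs_add_natAbs_winRep hN hN0 hm
  calc _ ≤ (C / c * Cv + Cv) * r ^ (m.natAbs + 2 * (winRep N m).natAbs) :=
        norm_mul_div_sub_le hr hr1 hc hC hCv hsl hsu hv (by omega) hkm
    _ ≤ (C / c * Cv + Cv) * r ^ (N + Nat.dist m.natAbs N) :=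
        mul_le_mul_of_nonneg_left
          (pow_le_pow_of_le_one hr.le hr1 (by simp only [Nat.dist]; omega)) (by positivity)
    _ = _ := by rw [pow_add, mul_assoc]

lemma tsum_pow_natAbs_le (q : ℝ≥0∞) : ∑' m : ℤ, q ^ m.natAbs ≤ 2 * (1 - q)⁻¹ :=
  calc ∑' m : ℤ, q ^ m.natAbs ≤ ∑' m : ℤ, q ^ m.natAbs + q ^ (0 : ℤ).natAbs := le_self_add
    _ = ∑' n : ℕ, 2 * q ^ n := by
        rw [← tsum_nat_add_neg ENNReal.summable]
        simp [two_mul]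
    _ = 2 * (1 - q)⁻¹ := by rw [ENNReal.tsum_mul_left, ENNReal.tsum_geometric]

/-- `||m| - N|` is the distance from `m` to the nearer of `±N`. -/
lemma tsum_pow_dist_natAbs_le (q : ℝ≥0∞) (N : ℕ) :
    ∑' m : ℤ, q ^ Nat.dist m.natAbs N ≤ 4 * (1 - q)⁻¹ := by
  have hle : ∀ m : ℤ, q ^ Nat.dist m.natAbs N ≤ q ^ (m - N).natAbs + q ^ (m + N).natAbs := by
    intro m
    rcases le_or_gt 0 m with hm | hm
    · exact le_add_right (le_of_eq (by congr 1; simp only [Nat.dist]; omega))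
    · exact le_add_left (le_of_eq (by congr 1; simp only [Nat.dist]; omega))
  calc ∑' m : ℤ, q ^ Nat.dist m.natAbs N
      ≤ ∑' m : ℤ, q ^ (m - N).natAbs + ∑' m : ℤ, q ^ (m + N).natAbs :=
        (ENNReal.tsum_le_tsum hle).trans_eq ENNReal.tsum_add
    _ = ∑' m : ℤ, q ^ m.natAbs + ∑' m : ℤ, q ^ m.natAbs := by
        congr 1
        exacts [(Equiv.subRight (N : ℤ)).tsum_eq fun m ↦ q ^ m.natAbs,
          (Equiv.addRight (N : ℤ)).tsum_eq fun m ↦ q ^ m.natAbs]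
    _ ≤ 4 * (1 - q)⁻¹ := by
        rw [show (4 : ℝ≥0∞) = 2 + 2 by norm_num, add_mul]
        exact add_le_add (tsum_pow_natAbs_le q) (tsum_pow_natAbs_le q)

lemma tsum_nnnorm_sq_le {E : Type*} [SeminormedAddGroup E] {f : ℤ → E} {D r : ℝ} (hr0 : 0 ≤ r)
    (hr1 : r < 1) (N : ℕ) (hf : ∀ m, ‖f m‖ ≤ D * r ^ Nat.dist m.natAbs N) :
    ∑' m, (‖f m‖₊ : ℝ≥0∞) ^ 2 ≤ ENNReal.ofReal (4 / (1 - r ^ 2) * D ^ 2) := by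
  have hr2 : r ^ 2 < 1 := pow_lt_one₀ hr0 hr1 two_ne_zero
  have hterm : ∀ m, (‖f m‖₊ : ℝ≥0∞) ^ 2 ≤
      ENNReal.ofReal (D ^ 2) * ENNReal.ofReal (r ^ 2) ^ Nat.dist m.natAbs N := by
    intro m
    rw [← ENNReal.ofReal_coe_nnreal, coe_nnnorm, ← ENNReal.ofReal_pow (norm_nonneg _),
      ← ENNReal.ofReal_pow (by positivity), ← ENNReal.ofReal_mul (by positivity), ← pow_mul,
      mul_comm 2, pow_mul, ← mul_pow]
    exact ENNReal.ofReal_le_ofReal (pow_le_pow_left₀ (norm_nonneg _) (hf m) 2)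
  calc ∑' m, (‖f m‖₊ : ℝ≥0∞) ^ 2
      ≤ ENNReal.ofReal (D ^ 2) * ∑' m : ℤ, ENNReal.ofReal (r ^ 2) ^ Nat.dist m.natAbs N :=
        (ENNReal.tsum_le_tsum hterm).trans_eq ENNReal.tsum_mul_left
    _ ≤ ENNReal.ofReal (D ^ 2) * (4 * (1 - ENNReal.ofReal (r ^ 2))⁻¹) := by
        gcongr
        exact tsum_pow_dist_natAbs_le _ N
    _ = ENNReal.ofReal (4 / (1 - r ^ 2) * D ^ 2) := by
        rw [← ENNReal.ofReal_one, ← ENNReal.ofReal_sub _ (by positivity),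
          ← ENNReal.ofReal_inv_of_pos (by linarith), ← ENNReal.ofReal_ofNat 4,
          ← ENNReal.ofReal_mul (by norm_num), ← ENNReal.ofReal_mul (by positivity), mul_comm,
          div_eq_mul_inv]

lemma tErr_le_of_tsum_le {N : ℕ} {s v a : ℤ → ℂ} {ε : ℝ} (hε : 0 ≤ ε)
    (h : ∑' m, (‖residual N s v a m‖₊ : ℝ≥0∞) ^ 2 ≤ ENNReal.ofReal ε) :
    tErr N s v a ≤ ENNReal.ofReal (Real.sqrt (2 * Real.pi * ε)) := by
  rw [Real.sqrt_eq_rpow, ← ENNReal.ofReal_rpow_of_nonneg (by positivity) (by norm_num),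
    ENNReal.ofReal_mul (by positivity)]
  exact ENNReal.rpow_le_rpow (by gcongr; exact h) (by norm_num)

end MFS

open MFS in
theorem mfs_convergence_entire_data_general
    (R cs Cs : ℝ) (hR : 1 < R)
    (hcs : 0 < cs) (hcsCs : cs ≤ Cs)
    (s v : ℤ → ℂ)
    (hs0 : s 0 ≠ 0)
    (hsl : ∀ m : ℤ, m ≠ 0 → cs / |(m : ℝ)| * R ^ (-|m|) ≤ ‖s m‖)
    (hsu : ∀ m : ℤ, m ≠ 0 → ‖s m‖ ≤ Cs / |(m : ℝ)| * R ^ (-|m|))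
    (hv : ∀ σ : ℝ, 1 < σ → ∃ Cσ : ℝ, 0 < Cσ ∧ ∀ m : ℤ, ‖v m‖ ≤ Cσ * σ ^ (-|m|)) :
    ∃ C : ℝ, 0 < C ∧ ∀ N : ℕ, Even N → 2 ≤ N →
      ∃ a : ℤ → ℂ, tErr N s v a ≤ ENNReal.ofReal (C * R ^ (-(N : ℝ))) := by
  set r := R⁻¹
  have hr : 0 < r := inv_pos.mpr (by linarith)
  have hr1 : r < 1 := inv_lt_one_of_one_lt₀ hR
  obtain ⟨Cv, hCv, hv3⟩ := hv (R ^ 3) (one_lt_pow₀ hR three_ne_zero)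
  obtain ⟨c, hc, hsl'⟩ := exists_pos_forall_le_norm hr.le hcs hs0 fun m hm ↦
    div_abs_mul_zpow_neg_abs cs R m ▸ hsl m hm
  set B := Cs / c * Cv + Cv
  have hB : 0 < B := by have := hcs.trans_le hcsCs; positivity
  set S := 4 / (1 - r ^ 2)
  have hS : 0 < S := div_pos four_pos (sub_pos.mpr (pow_lt_one₀ hr.le hr1 two_ne_zero))
  have hK : 0 < 2 * Real.pi * (S * B ^ 2) := by positivity
  refine ⟨Real.sqrt (2 * Real.pi * (S * B ^ 2)), Real.sqrt_pos.mpr hK, fun N hN hN2 ↦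
    ⟨interpCoeff N s v, ?_⟩⟩
  have hres := norm_residual_interpCoeff_le hN (by omega) hr hr1.le hc (hcs.le.trans hcsCs)
    hCv.le hsl' (fun m hm ↦ div_abs_mul_zpow_neg_abs Cs R m ▸ hsu m hm)
    (fun m ↦ by have := hv3 m; rwa [zpow_neg_abs, ← inv_pow] at this)
  refine (tErr_le_of_tsum_le (by positivity) (tsum_nnnorm_sq_le hr.le hr1 N hres)).trans_eq ?_
  have hRN : R ^ (-(N : ℝ)) = r ^ N := by
    rw [Real.rpow_neg (by linarith), Real.rpow_natCast, inv_pow]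
  rw [hRN, show 2 * Real.pi * (S * (B * r ^ N) ^ 2) = 2 * Real.pi * (S * B ^ 2) * (r ^ N) ^ 2 by
    ring, Real.sqrt_mul hK.le, Real.sqrt_sq (by positivity)]

/-- MFS convergence on the unit disc for entire boundary data: rate `R^{-N}` for any `R > 1`. -/
theorem mfs_convergence_entire_data
    (R cs Cs : ℝ) (hR : 1 < R)
    (hcs : 0 < cs) (hcsCs : cs ≤ Cs)
    (s v : ℤ → ℂ)
    (hs0 : s 0 ≠ 0) (hs0' : ‖s 0‖ ≤ Cs)
    (hsl : ∀ m : ℤ, m ≠ 0 → cs / |(m : ℝ)| * R ^ (-|m|) ≤ ‖s m‖)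
    (hsu : ∀ m : ℤ, m ≠ 0 → ‖s m‖ ≤ Cs / |(m : ℝ)| * R ^ (-|m|))
    (hv : ∀ σ : ℝ, 1 < σ → ∃ Cσ : ℝ, 0 < Cσ ∧ ∀ m : ℤ, ‖v m‖ ≤ Cσ * σ ^ (-|m|)) :
    ∃ C : ℝ, 0 < C ∧ ∀ N : ℕ, Even N → 2 ≤ N →
      ∃ a : ℤ → ℂ, tErr N s v a ≤ ENNReal.ofReal (C * R ^ (-(N : ℝ))) :=
  mfs_convergence_entire_data_general R cs Cs hR hcs hcsCs s v hs0 hsl hsu hv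
end
end

section
/- Assume the MFS setup with eigenvalue bounds (H_s) and boundary-data decay |v̂(m)| ≤ C_v·ρ^{−|m|} for all m ∈ ℤ, and suppose 1 < R < ρ. Let α̂ ∈ ℂ^N be given by α̂_m := (2π/N)·v̂(m)/ŝ(m) for −N/2 < m ≤ N/2. Then there is a constant C > 0, independent of N, such that |α̂_m| ≤ C·(R/ρ)^{|m|} for all m ≠ 0 in the window, and consequently the norms |α̂| are bounded by a constant independent of N. -/
open scoped BigOperators ENNReal NNReal

noncomputable section

/-! Indices in the window satisfy `|m| ≤ N/2`, so the weight `2π/N` absorbs the factor `|m|` by which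
`1/|ŝ(m)|` may exceed `R^{|m|}/c_s`; what remains is `π C_v/c_s · (R/ρ)^{|m|}`, independent of `N`.
Square-summing this geometric decay over all of `ℤ` bounds `|α̂|` uniformly in `N`. -/

open Real

theorem summable_pow_natAbs {r : ℝ} (hr0 : 0 ≤ r) (hr1 : r < 1) :
    Summable fun k : ℤ => r ^ k.natAbs :=
  Summable.of_nat_of_neg (by simpa using summable_geometric_of_lt_one hr0 hr1)
    (by simpa using summable_geometric_of_lt_one hr0 hr1)

theorem two_mul_natAbs_le_of_mem_window {N : ℕ} {m : ℤ} (hm : m ∈ window N) :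
    2 * m.natAbs ≤ N := by
  rw [window, Finset.mem_Icc] at hm
  omega

theorem coefNorm_le_of_norm_le_geometric {N : ℕ} {a : ℤ → ℂ} {C r : ℝ} (hC : 0 ≤ C)
    (hr0 : 0 ≤ r) (hr1 : r < 1) (ha : ∀ k ∈ window N, ‖a k‖ ≤ C * r ^ k.natAbs) :
    coefNorm N a ≤ C * √(∑' k : ℤ, (r ^ 2) ^ k.natAbs) := by
  have hsq : ∀ k ∈ window N, ‖a k‖ ^ 2 ≤ C ^ 2 * (r ^ 2) ^ k.natAbs := fun k hk => by
    rw [← pow_mul, mul_comm 2, pow_mul, ← mul_pow]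
    exact pow_le_pow_left₀ (norm_nonneg _) (ha k hk) 2
  have hsum : Summable fun k : ℤ => (r ^ 2) ^ k.natAbs :=
    summable_pow_natAbs (by positivity) (by nlinarith)
  calc coefNorm N a ≤ √(C ^ 2 * ∑' k : ℤ, (r ^ 2) ^ k.natAbs) := by
        refine sqrt_le_sqrt ((Finset.sum_le_sum hsq).trans ?_)
        rw [← Finset.mul_sum]
        gcongr
        exact hsum.sum_le_tsum _ fun k _ => by positivity
    _ = C * √(∑' k : ℤ, (r ^ 2) ^ k.natAbs) := by rw [sqrt_mul (by positivity), sqrt_sq hC]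

theorem norm_two_pi_div_mul_div (N : ℕ) (x y : ℂ) :
    ‖(2 * (π : ℂ)) / (N : ℂ) * x / y‖ = 2 * π / N * ‖x‖ / ‖y‖ := by
  simp [Complex.norm_real, abs_of_pos pi_pos]

theorem norm_two_pi_div_mul_div_le_pi {N : ℕ} (hN : 2 ≤ N) (x y : ℂ) :
    ‖(2 * (π : ℂ)) / (N : ℂ) * x / y‖ ≤ π * ‖x‖ / ‖y‖ := by
  rw [norm_two_pi_div_mul_div]
  have hN' : (2 : ℝ) ≤ N := by exact_mod_cast hN
  gcongr
  rw [div_le_iff₀ (by positivity)]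
  nlinarith [pi_pos]

theorem norm_two_pi_div_mul_div_le_of_decay {R ρ cs Cv : ℝ} (hR : 0 < R) (hρ : 0 < ρ)
    (hcs : 0 < cs) (hCv : 0 ≤ Cv) {N : ℕ} {m : ℤ} (hm0 : m ≠ 0) (hmN : 2 * m.natAbs ≤ N)
    {x y : ℂ} (hx : ‖x‖ ≤ Cv * ρ ^ (-|m|)) (hy : cs / |(m : ℝ)| * R ^ (-|m|) ≤ ‖y‖) :
    ‖(2 * (π : ℂ)) / (N : ℂ) * x / y‖ ≤ π * Cv / cs * (R / ρ) ^ |m| := by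
  set n := m.natAbs
  have hn : (0 : ℝ) < n := by simp [n, hm0]
  have hnN : 2 * (n : ℝ) ≤ N := by exact_mod_cast hmN
  have habs : |m| = (n : ℤ) := Int.abs_eq_natAbs m
  have habsR : |(m : ℝ)| = n := by rw [← Int.cast_abs, habs, Int.cast_natCast]
  rw [habs, zpow_neg, zpow_natCast] at hx hy
  rw [habsR] at hy
  rw [habs, zpow_natCast, norm_two_pi_div_mul_div, div_pow]
  calc 2 * π / N * ‖x‖ / ‖y‖ ≤ 2 * π / N * (Cv * (ρ ^ n)⁻¹) / (cs / n * (R ^ n)⁻¹) := by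
        gcongr
    _ = 2 * n / N * (π * Cv / cs * (R ^ n / ρ ^ n)) := by field_simp
    _ ≤ π * Cv / cs * (R ^ n / ρ ^ n) := by
        refine mul_le_of_le_one_left (by positivity) ?_
        exact (div_le_one (by linarith)).mpr hnN

theorem mfs_diagonal_coefficients_bounded_general
    (R ρ cs Cv : ℝ) (hR : 1 < R) (hRρ : R < ρ)
    (hcs : 0 < cs) (hCv : 0 < Cv)
    (s v : ℤ → ℂ)
    (hsl : ∀ m : ℤ, m ≠ 0 → cs / |(m : ℝ)| * R ^ (-|m|) ≤ ‖s m‖)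
    (hv : ∀ m : ℤ, ‖v m‖ ≤ Cv * ρ ^ (-|m|)) :
    ∃ C C' : ℝ, 0 < C ∧ 0 < C' ∧ ∀ N : ℕ, Even N → 2 ≤ N →
      (∀ m ∈ window N, m ≠ 0 →
        ‖(2 * (Real.pi : ℂ)) / (N : ℂ) * v m / s m‖ ≤ C * (R / ρ) ^ |m|) ∧
      coefNorm N (fun m => (2 * (Real.pi : ℂ)) / (N : ℂ) * v m / s m) ≤ C' := by
  have hR0 : 0 < R := by linarith
  have hρ0 : 0 < ρ := hR0.trans hRρ
  have hq1 : R / ρ < 1 := (div_lt_one hρ0).mpr hRρ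
  set C := π * Cv / cs
  set C₀ := max C (π * ‖v 0‖ / ‖s 0‖)
  have hC : 0 < C := by positivity
  have hC₀ : 0 < C₀ := lt_max_of_lt_left hC
  have hS : 0 < ∑' k : ℤ, ((R / ρ) ^ 2) ^ k.natAbs :=
    (summable_pow_natAbs (by positivity) (by nlinarith [div_pos hR0 hρ0])).tsum_pos
      (fun _ => by positivity) 0 (by simp)
  refine ⟨C, C₀ * √(∑' k : ℤ, ((R / ρ) ^ 2) ^ k.natAbs), hC, by positivity, fun N _ hN => ?_⟩
  have hdecay : ∀ m ∈ window N, m ≠ 0 →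
      ‖(2 * (π : ℂ)) / (N : ℂ) * v m / s m‖ ≤ C * (R / ρ) ^ |m| := fun m hm hm0 =>
    norm_two_pi_div_mul_div_le_of_decay hR0 hρ0 hcs hCv.le hm0
      (two_mul_natAbs_le_of_mem_window hm) (hv m) (hsl m hm0)
  refine ⟨hdecay, coefNorm_le_of_norm_le_geometric hC₀.le (by positivity) hq1 fun m hm => ?_⟩
  rcases eq_or_ne m 0 with rfl | hm0
  · simpa only [Int.natAbs_zero, pow_zero, mul_one] using
      (norm_two_pi_div_mul_div_le_pi hN (v 0) (s 0)).trans (le_max_right C _)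
  · rw [← zpow_natCast, ← Int.abs_eq_natAbs]
    exact (hdecay m hm hm0).trans (by gcongr; exact le_max_left _ _)

/-- When `1 < R < ρ`, the window-interpolating coefficients `α̂_m = (2π/N)·v̂(m)/ŝ(m)`
decay like `(R/ρ)^{|m|}`, hence their norms `|α̂|` are bounded uniformly in `N`. -/
theorem mfs_diagonal_coefficients_bounded
    (R ρ cs Cs Cv : ℝ) (hR : 1 < R) (hRρ : R < ρ)
    (hcs : 0 < cs) (hcsCs : cs ≤ Cs) (hCv : 0 < Cv)
    (s v : ℤ → ℂ)
    (hs0 : s 0 ≠ 0) (hs0' : ‖s 0‖ ≤ Cs)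
    (hsl : ∀ m : ℤ, m ≠ 0 → cs / |(m : ℝ)| * R ^ (-|m|) ≤ ‖s m‖)
    (hsu : ∀ m : ℤ, m ≠ 0 → ‖s m‖ ≤ Cs / |(m : ℝ)| * R ^ (-|m|))
    (hv : ∀ m : ℤ, ‖v m‖ ≤ Cv * ρ ^ (-|m|)) :
    ∃ C C' : ℝ, 0 < C ∧ 0 < C' ∧ ∀ N : ℕ, Even N → 2 ≤ N →
      (∀ m ∈ window N, m ≠ 0 →
        ‖(2 * (Real.pi : ℂ)) / (N : ℂ) * v m / s m‖ ≤ C * (R / ρ) ^ |m|) ∧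
      coefNorm N (fun m => (2 * (Real.pi : ℂ)) / (N : ℂ) * v m / s m) ≤ C' :=
  mfs_diagonal_coefficients_bounded_general R ρ cs Cv hR hRρ hcs hCv s v hsl hv
end
end
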